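/- arXiv:2205.14059 — 5 statements merged into one kernel-verified Lean document; each statement's English description precedes it below -/
import Mathlib

section
/- Let A be a finite set of real numbers written in increasing order A = {a_1 < a_2 < ... < a_n}, and let D = {a_{i+1} - a_i : 1 ≤ i ≤ n-1} be its set of consecutive differences. Suppose D' ⊆ D and L is a positive integer such that every d ∈ D' occurs at least L times as a consecutive difference, i.e. |{i ∈ [n-1] : a_{i+1} - a_i = d}| ≥ L for all d ∈ D'. Then |A + A - A| ≥ c · |D'|² · L for some absolute constant c > 0. -/
/-!
Every `d'` in `D'` is a positive gap `a (j+1) - a j`, so whenever `d' ≤ a (i+1) - a i`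
the point `a i + d' = a i + a (j+1) - a j` lies in `A + A - A` and in the interval
`(a i, a (i+1)]`. These intervals are disjoint, so distinct pairs `(d', i)` give distinct points.
Each `d ∈ D'` is the gap at `L` indices `i`, and at least half of the `|D'|²` pairs
`(d', d) ∈ D' × D'` satisfy `d' ≤ d`, so there are at least `|D'|² L / 2` such pairs.
-/

open Pointwise Finset

theorem Finset.sq_card_le_two_mul_card_filter_le {α : Type*} [LinearOrder α] (s : Finset α) :
    #s ^ 2 ≤ 2 * #{p ∈ s ×ˢ s | p.1 ≤ p.2} := by
  have hswap : #{p ∈ s ×ˢ s | p.2 ≤ p.1} = #{p ∈ s ×ˢ s | p.1 ≤ p.2} :=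
    card_equiv (Equiv.prodComm α α) fun p => by simp [and_comm]
  calc #s ^ 2 = #({p ∈ s ×ˢ s | p.1 ≤ p.2} ∪ {p ∈ s ×ˢ s | p.2 ≤ p.1}) := by
        rw [← filter_or, filter_true_of_mem fun p _ => le_total p.1 p.2, card_product, sq]
    _ ≤ #{p ∈ s ×ˢ s | p.1 ≤ p.2} + #{p ∈ s ×ˢ s | p.2 ≤ p.1} := card_union_le _ _
    _ = 2 * #{p ∈ s ×ˢ s | p.1 ≤ p.2} := by rw [hswap, two_mul]

theorem Finset.mul_card_rel_le_card_rel_of_le_card_fiber {ι α : Type*} [DecidableEq ι] [DecidableEq α]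
    (I : Finset ι) (g : ι → α) (D : Finset α) (r : α → α → Prop) [DecidableRel r] {L : ℕ}
    (hL : ∀ d ∈ D, L ≤ #{i ∈ I | g i = d}) :
    L * #{p ∈ D ×ˢ D | r p.1 p.2} ≤ #{p ∈ D ×ˢ I | g p.2 ∈ D ∧ r p.1 (g p.2)} := by
  refine mul_card_image_le_card_of_maps_to (f := fun p => (p.1, g p.2)) ?_ L ?_
  · intro p hp
    simp only [mem_filter, mem_product] at hp ⊢
    exact ⟨⟨hp.1.1, hp.2.1⟩, hp.2.2⟩
  · rintro ⟨x, d⟩ hxd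
    simp only [mem_filter, mem_product] at hxd
    refine (hL d hxd.1.2).trans (card_le_card_of_injOn (fun i => (x, i)) ?_ ?_)
    · intro i hi
      obtain ⟨hiI, rfl⟩ := mem_filter.mp hi
      simp only [mem_coe, mem_filter, mem_product]
      exact ⟨⟨⟨hxd.1.1, hiI⟩, hxd.1.2, hxd.2⟩, trivial⟩
    · intro i _ j _ hij
      exact congrArg Prod.snd hij

theorem MonotoneOn.eq_of_mem_Ioc_succ {α : Type*} [Preorder α] {a : ℕ → α} {n i j : ℕ}
    (ha : MonotoneOn a (Set.Icc 1 n)) (hi : i ∈ Set.Icc 1 (n - 1)) (hj : j ∈ Set.Icc 1 (n - 1))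
    {x : α} (hxi : x ∈ Set.Ioc (a i) (a (i + 1))) (hxj : x ∈ Set.Ioc (a j) (a (j + 1))) :
    i = j := by
  obtain ⟨hi1, hin⟩ := hi
  obtain ⟨hj1, hjn⟩ := hj
  rcases lt_trichotomy i j with h | h | h
  · have := ha ⟨by omega, by omega⟩ ⟨hj1, by omega⟩ (Nat.succ_le_of_lt h)
    exact absurd (hxj.1.trans_le (hxi.2.trans this)) (lt_irrefl _)
  · exact h
  · have := ha ⟨by omega, by omega⟩ ⟨hi1, by omega⟩ (Nat.succ_le_of_lt h)
    exact absurd (hxi.1.trans_le (hxj.2.trans this)) (lt_irrefl _)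

theorem MonotoneOn.injOn_add_of_le_sub {α : Type*} [AddCommGroup α] [LinearOrder α]
    [IsOrderedAddMonoid α] {a : ℕ → α} {n : ℕ} (ha : MonotoneOn a (Set.Icc 1 n)) :
    Set.InjOn (fun p : α × ℕ => a p.2 + p.1)
      {p | p.2 ∈ Set.Icc 1 (n - 1) ∧ 0 < p.1 ∧ p.1 ≤ a (p.2 + 1) - a p.2} := by
  have mem_Ioc : ∀ p : α × ℕ, 0 < p.1 → p.1 ≤ a (p.2 + 1) - a p.2 →
      a p.2 + p.1 ∈ Set.Ioc (a p.2) (a (p.2 + 1)) := fun p hpos hle =>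
    ⟨lt_add_of_pos_right _ hpos, le_sub_iff_add_le'.mp hle⟩
  rintro p ⟨hp, hppos, hple⟩ q ⟨hq, hqpos, hqle⟩ (hpq : a p.2 + p.1 = a q.2 + q.1)
  have hidx : p.2 = q.2 :=
    ha.eq_of_mem_Ioc_succ hp hq (mem_Ioc p hppos hple) (hpq ▸ mem_Ioc q hqpos hqle)
  exact Prod.ext (add_left_cancel (hidx ▸ hpq)) hidx

theorem stmt0 :
    ∃ c : ℝ, 0 < c ∧
      ∀ (n : ℕ) (a : ℕ → ℝ), StrictMonoOn a (Set.Icc 1 n) →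
        ∀ (D' : Finset ℝ) (L : ℕ), 0 < L →
          (∀ d ∈ D',
            L ≤ ((Finset.Icc 1 (n - 1)).filter (fun i => a (i + 1) - a i = d)).card) →
          (∀ d ∈ D', ∃ i, 1 ≤ i ∧ i ≤ n - 1 ∧ a (i + 1) - a i = d) →
          c * (D'.card : ℝ) ^ 2 * L ≤
            ((((Finset.Icc 1 n).image a) + ((Finset.Icc 1 n).image a) -
                ((Finset.Icc 1 n).image a)).card : ℝ) := by
  refine ⟨1 / 2, by norm_num, fun n a ha D' L _ hcnt hocc => ?_⟩
  set A := (Icc 1 n).image a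
  set g : ℕ → ℝ := fun i => a (i + 1) - a i
  set P : Finset (ℝ × ℕ) := {p ∈ D' ×ˢ Icc 1 (n - 1) | g p.2 ∈ D' ∧ p.1 ≤ g p.2}
  have hgap : ∀ d ∈ D', 0 < d ∧ d ∈ A - A := by
    intro d hd
    obtain ⟨j, hj1, hjn, rfl⟩ := hocc d hd
    exact ⟨sub_pos.mpr (ha ⟨hj1, by omega⟩ ⟨by omega, by omega⟩ (by omega)),
      sub_mem_sub (mem_image_of_mem a (by simp; omega)) (mem_image_of_mem a (by simp; omega))⟩
  have hmaps : Set.MapsTo (fun p : ℝ × ℕ => a p.2 + p.1) P ((A + A - A : Finset ℝ) : Set ℝ) := by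
    intro p hp
    simp only [P, mem_coe, mem_filter, mem_product, mem_Icc] at hp
    rw [mem_coe, add_sub_assoc]
    exact add_mem_add (mem_image_of_mem a (by simp; omega)) (hgap p.1 hp.1.1).2
  have hinj : Set.InjOn (fun p : ℝ × ℕ => a p.2 + p.1) P := by
    refine ha.monotoneOn.injOn_add_of_le_sub.mono fun p hp => ?_
    simp only [P, mem_coe, mem_filter, mem_product, mem_Icc] at hp
    exact ⟨hp.1.2, (hgap p.1 hp.1.1).1, hp.2.2⟩
  have key : #D' ^ 2 * L ≤ 2 * #(A + A - A) :=
    calc #D' ^ 2 * L ≤ 2 * (L * #{p ∈ D' ×ˢ D' | p.1 ≤ p.2}) := by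
          nlinarith [D'.sq_card_le_two_mul_card_filter_le]
      _ ≤ 2 * #(A + A - A) := by
          gcongr
          exact ((Icc 1 (n - 1)).mul_card_rel_le_card_rel_of_le_card_fiber g D' (· ≤ ·) hcnt).trans
            (card_le_card_of_injOn _ hmaps hinj)
  have key' : ((#D' ^ 2 * L : ℕ) : ℝ) ≤ ((2 * #(A + A - A) : ℕ) : ℝ) := by exact_mod_cast key
  push_cast at key'
  linarith
end

section
/- Let f : ℝ² → ℝ be a twice continuously differentiable function, and let U be a nonempty open subset of the domain of f on which neither partial derivative f_x nor f_y vanishes. Suppose there exist twice differentiable univariate real functions ψ, φ₁, φ₂ such that f(x,y) = ψ(φ₁(x) + φ₂(y)) for all (x,y) ∈ U. Then the mixed second partial derivative ∂²(ln|f_x/f_y|)/∂x∂y is identically zero on U. -/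
/-!
On `U` both partial derivatives factor through the chain rule, `f_x = ψ' · φ₁'(x)` and
`f_y = ψ' · φ₂'(y)`, so `ln |f_x / f_y| = ln |φ₁'(x)| - ln |φ₂'(y)|` near every point of `U`.
Its `x`-derivative therefore does not depend on `y`, and the mixed derivative vanishes.
-/

open Filter Topology

theorem deriv_deriv_eq_zero_of_eventually_eq_sub {F : ℝ → ℝ → ℝ} {g h : ℝ → ℝ} {p : ℝ × ℝ}
    (hF : ∀ᶠ q in 𝓝 p, F q.1 q.2 = g q.1 - h q.2) :
    deriv (fun y => deriv (fun x => F x y) p.1) p.2 = 0 := by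
  rw [← Prod.mk.eta (p := p), nhds_prod_eq] at hF
  obtain ⟨sx, hsx, sy, hsy, hs⟩ := eventually_prod_iff.mp hF
  have hconst : (fun y => deriv (fun x => F x y) p.1) =ᶠ[𝓝 p.2] fun _ => deriv g p.1 := by
    filter_upwards [hsy] with y hy
    have hFy : (fun x => F x y) =ᶠ[𝓝 p.1] fun x => g x - h y := by
      filter_upwards [hsx] with x hx using hs hx hy
    rw [hFy.deriv_eq, deriv_sub_const]
  rw [hconst.deriv_eq, deriv_const]

theorem Filter.EventuallyEq.deriv_partial_fst {f g : ℝ × ℝ → ℝ} {q : ℝ × ℝ} (h : f =ᶠ[𝓝 q] g) :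
    deriv (fun x => f (x, q.2)) q.1 = deriv (fun x => g (x, q.2)) q.1 :=
  (h.comp_tendsto ((Continuous.prodMk_left q.2).tendsto' q.1 q rfl)).deriv_eq

theorem Filter.EventuallyEq.deriv_partial_snd {f g : ℝ × ℝ → ℝ} {q : ℝ × ℝ} (h : f =ᶠ[𝓝 q] g) :
    deriv (fun y => f (q.1, y)) q.2 = deriv (fun y => g (q.1, y)) q.2 :=
  (h.comp_tendsto ((Continuous.prodMk_right q.1).tendsto' q.2 q rfl)).deriv_eq

theorem deriv_partial_fst_comp_add {ψ φ₁ φ₂ : ℝ → ℝ} {q : ℝ × ℝ}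
    (hψ : DifferentiableAt ℝ ψ (φ₁ q.1 + φ₂ q.2)) (hφ₁ : DifferentiableAt ℝ φ₁ q.1) :
    deriv (fun x => ψ (φ₁ x + φ₂ q.2)) q.1 = deriv ψ (φ₁ q.1 + φ₂ q.2) * deriv φ₁ q.1 :=
  (hψ.hasDerivAt.comp q.1 (hφ₁.hasDerivAt.add_const _)).deriv

theorem deriv_partial_snd_comp_add {ψ φ₁ φ₂ : ℝ → ℝ} {q : ℝ × ℝ}
    (hψ : DifferentiableAt ℝ ψ (φ₁ q.1 + φ₂ q.2)) (hφ₂ : DifferentiableAt ℝ φ₂ q.2) :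
    deriv (fun y => ψ (φ₁ q.1 + φ₂ y)) q.2 = deriv ψ (φ₁ q.1 + φ₂ q.2) * deriv φ₂ q.2 :=
  (hψ.hasDerivAt.comp q.2 (hφ₂.hasDerivAt.const_add _)).deriv

theorem log_abs_div_deriv_partial_eq_of_eventuallyEq_comp_add {f : ℝ × ℝ → ℝ}
    {ψ φ₁ φ₂ : ℝ → ℝ} {q : ℝ × ℝ} (hrep : f =ᶠ[𝓝 q] fun z => ψ (φ₁ z.1 + φ₂ z.2))
    (hψ : DifferentiableAt ℝ ψ (φ₁ q.1 + φ₂ q.2)) (hφ₁ : DifferentiableAt ℝ φ₁ q.1)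
    (hφ₂ : DifferentiableAt ℝ φ₂ q.2)
    (hfx : deriv (fun x => f (x, q.2)) q.1 ≠ 0) (hfy : deriv (fun y => f (q.1, y)) q.2 ≠ 0) :
    Real.log |deriv (fun x => f (x, q.2)) q.1 / deriv (fun y => f (q.1, y)) q.2|
      = Real.log |deriv φ₁ q.1| - Real.log |deriv φ₂ q.2| := by
  rw [hrep.deriv_partial_fst, deriv_partial_fst_comp_add hψ hφ₁] at hfx ⊢
  rw [hrep.deriv_partial_snd, deriv_partial_snd_comp_add hψ hφ₂] at hfy ⊢
  rw [mul_div_mul_left _ _ (left_ne_zero_of_mul hfx), abs_div, Real.log_div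
    (abs_ne_zero.2 (right_ne_zero_of_mul hfx)) (abs_ne_zero.2 (right_ne_zero_of_mul hfy))]

theorem stmt1_general (f : ℝ × ℝ → ℝ)
    (U : Set (ℝ × ℝ)) (hU : IsOpen U)
    (hfx : ∀ p ∈ U, deriv (fun x => f (x, p.2)) p.1 ≠ 0)
    (hfy : ∀ p ∈ U, deriv (fun y => f (p.1, y)) p.2 ≠ 0)
    (ψ φ₁ φ₂ : ℝ → ℝ) (hψ : ContDiff ℝ 2 ψ) (hφ₁ : ContDiff ℝ 2 φ₁)
    (hφ₂ : ContDiff ℝ 2 φ₂)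
    (hrep : ∀ p ∈ U, f p = ψ (φ₁ p.1 + φ₂ p.2)) :
    ∀ p ∈ U,
      deriv (fun y =>
        deriv (fun x =>
          Real.log |deriv (fun x' => f (x', y)) x / deriv (fun y' => f (x, y')) y|)
          p.1) p.2 = 0 := by
  intro p hp
  refine deriv_deriv_eq_zero_of_eventually_eq_sub (g := fun x => Real.log |deriv φ₁ x|)
    (h := fun y => Real.log |deriv φ₂ y|) ?_
  filter_upwards [hU.mem_nhds hp] with q hq
  exact log_abs_div_deriv_partial_eq_of_eventuallyEq_comp_add
    (eventually_of_mem (hU.mem_nhds hq) hrep) (hψ.differentiable two_ne_zero _)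
    (hφ₁.differentiable two_ne_zero _) (hφ₂.differentiable two_ne_zero _) (hfx q hq) (hfy q hq)

theorem stmt1 (f : ℝ × ℝ → ℝ) (hf : ContDiff ℝ 2 f)
    (U : Set (ℝ × ℝ)) (hU : IsOpen U) (hne : U.Nonempty)
    (hfx : ∀ p ∈ U, deriv (fun x => f (x, p.2)) p.1 ≠ 0)
    (hfy : ∀ p ∈ U, deriv (fun y => f (p.1, y)) p.2 ≠ 0)
    (ψ φ₁ φ₂ : ℝ → ℝ) (hψ : ContDiff ℝ 2 ψ) (hφ₁ : ContDiff ℝ 2 φ₁)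
    (hφ₂ : ContDiff ℝ 2 φ₂)
    (hrep : ∀ p ∈ U, f p = ψ (φ₁ p.1 + φ₂ p.2)) :
    ∀ p ∈ U,
      deriv (fun y =>
        deriv (fun x =>
          Real.log |deriv (fun x' => f (x', y)) x / deriv (fun y' => f (x, y')) y|)
          p.1) p.2 = 0 :=
  stmt1_general f U hU hfx hfy ψ φ₁ φ₂ hψ hφ₁ hφ₂ hrep
end

section
/- Let A = {a_1 < a_2 < ... < a_n} be a finite set of reals with n ≥ 4, and choose i minimizing a_{i+3} - a_i over 1 ≤ i ≤ n-3. Then the open intervals (a_i + a_{3j}, a_{i+3} + a_{3j}) for 1 ≤ j ≤ ⌊n/3⌋ are pairwise disjoint. -/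
theorem stmt9 (n : ℕ) (hn : 4 ≤ n) (a : ℕ → ℝ)
    (ha : StrictMonoOn a (Set.Icc 1 n))
    (i : ℕ) (hi1 : 1 ≤ i) (hi2 : i ≤ n - 3)
    (hmin : ∀ j, 1 ≤ j → j ≤ n - 3 → a (i + 3) - a i ≤ a (j + 3) - a j) :
    ∀ j j', 1 ≤ j → j ≤ n / 3 → 1 ≤ j' → j' ≤ n / 3 → j ≠ j' →
      Disjoint (Set.Ioo (a i + a (3 * j)) (a (i + 3) + a (3 * j)))
        (Set.Ioo (a i + a (3 * j')) (a (i + 3) + a (3 * j'))) := by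
  have key : ∀ j j', 1 ≤ j → j ≤ n / 3 → 1 ≤ j' → j' ≤ n / 3 → j < j' →
      Disjoint (Set.Ioo (a i + a (3 * j)) (a (i + 3) + a (3 * j)))
        (Set.Ioo (a i + a (3 * j')) (a (i + 3) + a (3 * j'))) := by
    intro j j' hj1 hj2 hj1' hj2' hlt
    have h1 : a (i + 3) - a i ≤ a (3 * j + 3) - a (3 * j) :=
      hmin (3 * j) (by omega) (by omega)
    have h2 : a (3 * j + 3) ≤ a (3 * j') := by
      rcases eq_or_lt_of_le (show 3 * j + 3 ≤ 3 * j' by omega) with h | h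
      · exact le_of_eq (by rw [h])
      · exact (ha (Set.mem_Icc.mpr ⟨by omega, by omega⟩)
          (Set.mem_Icc.mpr ⟨by omega, by omega⟩) h).le
    rw [Set.disjoint_left]
    intro x hx hx'
    have h3 := hx.2
    have h4 := hx'.1
    linarith
  intro j j' hj1 hj2 hj1' hj2' hne
  rcases hne.lt_or_gt with h | h
  · exact key j j' hj1 hj2 hj1' hj2' h
  · exact (key j' j hj1' hj2' hj1 hj2 h).symm
end

section
/- Suppose positive reals x, y, z and s₀ < s₁ < s₂ < s₃ and t, t' (all positive) satisfy x = ((s₁t' + 1)(s₀t + 1))/((s₀t' + 1)(s₁t + 1)), y = ((s₂t' + 1)(s₁t + 1))/((s₁t' + 1)(s₂t + 1)), and z = ((s₃t' + 1)(s₂t + 1))/((s₂t' + 1)(s₃t + 1)). Then (x-1)(z-1)·G(x,y,z) = 0, where G(x,y,z) = (xy²z + 1)(s₀-s₁)(s₂-s₃) + (xyz + y)(s₂-s₀)(s₁-s₃) + (yz + xy)(s₀-s₃)(s₁-s₂). -/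
/-!
Write `r s = (s t' + 1) / (s t + 1)`, a Möbius function of `s`, and `rᵢ = r sᵢ`. Then
`x = r₁ / r₀`, `y = r₂ / r₁`, `z = r₃ / r₂`, so `r₀ r₁ G(x, y, z)` is the sum over the three
pairings `{{i, j}, {k, l}}` of `{0, 1, 2, 3}` of `(rᵢ rⱼ + rₖ rₗ)` times the matching product of
differences of the `s`'s. That sum vanishes for every Möbius function, so already `G(x, y, z) = 0`.
-/

section Moebius

variable {K : Type*} [Field K]

def moebius (a b c d s : K) : K := (a * s + b) / (c * s + d)

theorem moebius_pairing_sum_eq_zero (a b c d s₀ s₁ s₂ s₃ : K)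
    (h₀ : c * s₀ + d ≠ 0) (h₁ : c * s₁ + d ≠ 0) (h₂ : c * s₂ + d ≠ 0) (h₃ : c * s₃ + d ≠ 0) :
    (moebius a b c d s₂ * moebius a b c d s₃ + moebius a b c d s₀ * moebius a b c d s₁) *
        (s₀ - s₁) * (s₂ - s₃) +
      (moebius a b c d s₁ * moebius a b c d s₃ + moebius a b c d s₀ * moebius a b c d s₂) *
        (s₂ - s₀) * (s₁ - s₃) +
      (moebius a b c d s₀ * moebius a b c d s₃ + moebius a b c d s₁ * moebius a b c d s₂) *
        (s₀ - s₃) * (s₁ - s₂) = 0 := by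
  unfold moebius
  -- `field_simp` only clears the denominators once they are atoms
  generalize hq₀ : c * s₀ + d = q₀ at *
  generalize hq₁ : c * s₁ + d = q₁ at *
  generalize hq₂ : c * s₂ + d = q₂ at *
  generalize hq₃ : c * s₃ + d = q₃ at *
  field_simp
  subst hq₀ hq₁ hq₂ hq₃
  ring

theorem moebius_div_moebius (t t' s s' : K) :
    ((s' * t' + 1) * (s * t + 1)) / ((s * t' + 1) * (s' * t + 1)) =
      moebius t' 1 t 1 s' / moebius t' 1 t 1 s := by
  unfold moebius
  field_simp

theorem pairing_sum_of_consecutive_ratios (s₀ s₁ s₂ s₃ r₀ r₁ r₂ r₃ : K)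
    (h₀ : r₀ ≠ 0) (h₁ : r₁ ≠ 0) (h₂ : r₂ ≠ 0) :
    ((r₁ / r₀ * (r₂ / r₁) ^ 2 * (r₃ / r₂) + 1) * (s₀ - s₁) * (s₂ - s₃) +
        (r₁ / r₀ * (r₂ / r₁) * (r₃ / r₂) + r₂ / r₁) * (s₂ - s₀) * (s₁ - s₃) +
        (r₂ / r₁ * (r₃ / r₂) + r₁ / r₀ * (r₂ / r₁)) * (s₀ - s₃) * (s₁ - s₂)) * (r₀ * r₁) =
      (r₂ * r₃ + r₀ * r₁) * (s₀ - s₁) * (s₂ - s₃) +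
        (r₁ * r₃ + r₀ * r₂) * (s₂ - s₀) * (s₁ - s₃) +
        (r₀ * r₃ + r₁ * r₂) * (s₀ - s₃) * (s₁ - s₂) := by
  field_simp

end Moebius

theorem stmt12_general (s₀ s₁ s₂ s₃ t t' x y z : ℝ)
    (hs₀ : 0 < s₀) (h01 : s₀ < s₁) (h12 : s₁ < s₂) (h23 : s₂ < s₃)
    (ht : 0 < t) (ht' : 0 < t')
    (hxe : x = ((s₁ * t' + 1) * (s₀ * t + 1)) / ((s₀ * t' + 1) * (s₁ * t + 1)))
    (hye : y = ((s₂ * t' + 1) * (s₁ * t + 1)) / ((s₁ * t' + 1) * (s₂ * t + 1)))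
    (hze : z = ((s₃ * t' + 1) * (s₂ * t + 1)) / ((s₂ * t' + 1) * (s₃ * t + 1))) :
    (x - 1) * (z - 1) *
      ((x * y ^ 2 * z + 1) * (s₀ - s₁) * (s₂ - s₃) +
        (x * y * z + y) * (s₂ - s₀) * (s₁ - s₃) +
        (y * z + x * y) * (s₀ - s₃) * (s₁ - s₂)) = 0 := by
  have hs₁ := hs₀.trans h01
  have hs₂ := hs₁.trans h12
  have hs₃ := hs₂.trans h23
  have hq : ∀ {s : ℝ}, 0 < s → t * s + 1 ≠ 0 := fun hs => by positivity
  set r := moebius t' 1 t 1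
  have hr : ∀ {s : ℝ}, 0 < s → r s ≠ 0 := fun hs => div_ne_zero (by positivity) (hq hs)
  rw [moebius_div_moebius] at hxe hye hze
  have hG := pairing_sum_of_consecutive_ratios s₀ s₁ s₂ s₃ (r s₀) (r s₁) (r s₂) (r s₃)
    (hr hs₀) (hr hs₁) (hr hs₂)
  rw [moebius_pairing_sum_eq_zero t' 1 t 1 s₀ s₁ s₂ s₃ (hq hs₀) (hq hs₁) (hq hs₂) (hq hs₃),
    ← hxe, ← hye, ← hze] at hG
  rw [(mul_eq_zero.mp hG).resolve_right (mul_ne_zero (hr hs₀) (hr hs₁)), mul_zero]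

theorem stmt12 (s₀ s₁ s₂ s₃ t t' x y z : ℝ)
    (hs₀ : 0 < s₀) (h01 : s₀ < s₁) (h12 : s₁ < s₂) (h23 : s₂ < s₃)
    (ht : 0 < t) (ht' : 0 < t') (hx : 0 < x) (hy : 0 < y) (hz : 0 < z)
    (hxe : x = ((s₁ * t' + 1) * (s₀ * t + 1)) / ((s₀ * t' + 1) * (s₁ * t + 1)))
    (hye : y = ((s₂ * t' + 1) * (s₁ * t + 1)) / ((s₁ * t' + 1) * (s₂ * t + 1)))
    (hze : z = ((s₃ * t' + 1) * (s₂ * t + 1)) / ((s₂ * t' + 1) * (s₃ * t + 1))) :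
    (x - 1) * (z - 1) *
      ((x * y ^ 2 * z + 1) * (s₀ - s₁) * (s₂ - s₃) +
        (x * y * z + y) * (s₂ - s₀) * (s₁ - s₃) +
        (y * z + x * y) * (s₀ - s₃) * (s₁ - s₂)) = 0 :=
  stmt12_general s₀ s₁ s₂ s₃ t t' x y z hs₀ h01 h12 h23 ht ht' hxe hye hze
end

section
/- Suppose positive reals x, y, z with x ≠ 1 and z ≠ 1, positive reals s₀ < s₁ < s₂ < s₃, and positive reals t, t' satisfy the three equations x = ((s₁t' + 1)(s₀t + 1))/((s₀t' + 1)(s₁t + 1)), y = ((s₂t' + 1)(s₁t + 1))/((s₁t' + 1)(s₂t + 1)), z = ((s₃t' + 1)(s₂t + 1))/((s₂t' + 1)(s₃t + 1)). Then G(x,y,z) = 0 where G(x,y,z) = (xy²z + 1)(s₀-s₁)(s₂-s₃) + (xyz + y)(s₂-s₀)(s₁-s₃) + (yz + xy)(s₀-s₃)(s₁-s₂). -/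
/-! The substitution `aᵢ = sᵢ t + 1`, `bᵢ = sᵢ t' + 1` gives `x = b₁a₀/(b₀a₁)`,
`y = b₂a₁/(b₁a₂)`, `z = b₃a₂/(b₂a₃)`, and multiplying `G(x,y,z)` by `b₀b₁a₂a₃` turns each of its
three terms into `(sᵢ - sⱼ)(sₖ - sₗ)(aᵢaⱼbₖbₗ + bᵢbⱼaₖaₗ)`, one for each splitting of `{0,1,2,3}`
into two pairs. The sum of these three terms vanishes identically as soon as `a` and `b` are
affine functions of `s`. -/

theorem pairing_sum_eq_zero_of_affine {R : Type*} [CommRing R] {a b : R → R} {c d c' d' : R}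
    (ha : ∀ s, a s = s * c + d) (hb : ∀ s, b s = s * c' + d') (s₀ s₁ s₂ s₃ : R) :
    (s₀ - s₁) * (s₂ - s₃) * (a s₀ * a s₁ * b s₂ * b s₃ + b s₀ * b s₁ * a s₂ * a s₃) +
      (s₂ - s₀) * (s₁ - s₃) * (a s₀ * a s₂ * b s₁ * b s₃ + b s₀ * b s₂ * a s₁ * a s₃) +
      (s₀ - s₃) * (s₁ - s₂) * (a s₀ * a s₃ * b s₁ * b s₂ + b s₀ * b s₃ * a s₁ * a s₂) = 0 := by
  simp only [ha, hb]
  ring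

theorem stmt13_general (s₀ s₁ s₂ s₃ t t' x y z : ℝ)
    (hs₀ : 0 < s₀) (h01 : s₀ < s₁) (h12 : s₁ < s₂) (h23 : s₂ < s₃)
    (ht : 0 < t) (ht' : 0 < t')
    (hxe : x = ((s₁ * t' + 1) * (s₀ * t + 1)) / ((s₀ * t' + 1) * (s₁ * t + 1)))
    (hye : y = ((s₂ * t' + 1) * (s₁ * t + 1)) / ((s₁ * t' + 1) * (s₂ * t + 1)))
    (hze : z = ((s₃ * t' + 1) * (s₂ * t + 1)) / ((s₂ * t' + 1) * (s₃ * t + 1))) :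
    (x * y ^ 2 * z + 1) * (s₀ - s₁) * (s₂ - s₃) +
      (x * y * z + y) * (s₂ - s₀) * (s₁ - s₃) +
      (y * z + x * y) * (s₀ - s₃) * (s₁ - s₂) = 0 := by
  have hs₁ := hs₀.trans h01
  have hs₂ := hs₁.trans h12
  have hs₃ := hs₂.trans h23
  subst hxe hye hze
  field_simp
  linear_combination (s₁ * t' + 1) * (s₂ * t + 1) *
    pairing_sum_eq_zero_of_affine (a := fun s => s * t + 1) (b := fun s => s * t' + 1)
      (fun _ => rfl) (fun _ => rfl) s₀ s₁ s₂ s₃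

theorem stmt13 (s₀ s₁ s₂ s₃ t t' x y z : ℝ)
    (hs₀ : 0 < s₀) (h01 : s₀ < s₁) (h12 : s₁ < s₂) (h23 : s₂ < s₃)
    (ht : 0 < t) (ht' : 0 < t') (hx : 0 < x) (hy : 0 < y) (hz : 0 < z)
    (hx1 : x ≠ 1) (hz1 : z ≠ 1)
    (hxe : x = ((s₁ * t' + 1) * (s₀ * t + 1)) / ((s₀ * t' + 1) * (s₁ * t + 1)))
    (hye : y = ((s₂ * t' + 1) * (s₁ * t + 1)) / ((s₁ * t' + 1) * (s₂ * t + 1)))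
    (hze : z = ((s₃ * t' + 1) * (s₂ * t + 1)) / ((s₂ * t' + 1) * (s₃ * t + 1))) :
    (x * y ^ 2 * z + 1) * (s₀ - s₁) * (s₂ - s₃) +
      (x * y * z + y) * (s₂ - s₀) * (s₁ - s₃) +
      (y * z + x * y) * (s₀ - s₃) * (s₁ - s₂) = 0 :=
  stmt13_general s₀ s₁ s₂ s₃ t t' x y z hs₀ h01 h12 h23 ht ht' hxe hye hze
end
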